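/- Fix n ≥ 1, real numbers ω₁, …, ω_n and κ₁, …, κ_n > 0, and let α : ℝ → ℂⁿ be differentiable with α_c'(t) = -i·ω_c·α_c(t) - Σ_{c'} (√(κ_c·κ_{c'})/2)·α_{c'}(t) for each c. Then for all t, d/dt (Σ_c |α_c(t)|²) = -|Σ_c √κ_c·α_c(t)|² ≤ 0; in particular t ↦ Σ_c |α_c(t)|² is non-increasing. -/

import Mathlib

/-!
Writing `v = (√κ_c)_c`, the vector field of the amplitudes is `-iΩ - ½ v vᵀ`, because
`√(κ_c κ_{c'}) = √κ_c √κ_{c'}`. The rotation `-iΩ` is orthogonal to `α` in the real inner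
product, so `d/dt ‖α‖² = 2 ⟪α, -½ v (vᵀα)⟫ = -|vᵀα|²`, and a nonpositive derivative makes the
photon number antitone.
-/

open scoped BigOperators
open Complex Finset RealInnerProductSpace

variable {ι : Type*} [Fintype ι]

noncomputable def cavityDrift (ω v : ι → ℝ) (x : ι → ℂ) (c : ι) : ℂ :=
  -(I * ω c) * x c - ((v c / 2 : ℝ) : ℂ) * ∑ c', (v c' : ℂ) * x c'

theorem cavityDrift_sqrt_eq {κ : ι → ℝ} (hκ : ∀ c, 0 ≤ κ c) (ω : ι → ℝ) (x : ι → ℂ) (c : ι) :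
    cavityDrift ω (fun c => √(κ c)) x c
      = -(I * ω c) * x c - ∑ c', ((√(κ c * κ c') / 2 : ℝ) : ℂ) * x c' := by
  simp only [cavityDrift, mul_sum, Real.sqrt_mul (hκ c)]
  push_cast
  congr 1
  exact sum_congr rfl fun _ _ => by ring

theorem real_inner_I_mul_self (r : ℝ) (z : ℂ) : ⟪z, I * r * z⟫ = 0 := by
  simp [Complex.inner, mul_assoc, mul_conj]

theorem sum_inner_cavityDrift (ω v : ι → ℝ) (x : ι → ℂ) :
    ∑ c, 2 * ⟪x c, cavityDrift ω v x c⟫ = -‖∑ c, (v c : ℂ) * x c‖ ^ 2 := by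
  set S := ∑ c, (v c : ℂ) * x c
  have hmode : ∀ c, 2 * ⟪x c, cavityDrift ω v x c⟫ = -(v c * ⟪x c, S⟫) := by
    intro c
    rw [cavityDrift, neg_mul, inner_sub_right, inner_neg_right, real_inner_I_mul_self,
      ← Complex.real_smul, real_inner_smul_right]
    ring
  have hS : ∑ c, v c * ⟪x c, S⟫ = ⟪S, S⟫ := by
    simp only [S, sum_inner, ← Complex.real_smul, real_inner_smul_left]
  rw [sum_congr rfl fun c _ => hmode c, sum_neg_distrib, hS, real_inner_self_eq_norm_sq]

theorem multimode_photon_number_lyapunov_general (n : ℕ)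
    (ω κ : Fin n → ℝ) (hκ : ∀ c, 0 < κ c) (α : ℝ → Fin n → ℂ)
    (hα : ∀ c (t : ℝ),
      HasDerivAt (fun t => α t c)
        (-(Complex.I * (ω c : ℂ)) * α t c
          - ∑ c', ((Real.sqrt (κ c * κ c') / 2 : ℝ) : ℂ) * α t c') t) :
    (∀ t : ℝ,
      HasDerivAt (fun t => ∑ c, ‖α t c‖ ^ 2)
        (-‖∑ c, ((Real.sqrt (κ c) : ℂ)) * α t c‖ ^ 2) t)
    ∧ ∀ s t : ℝ, s ≤ t → ∑ c, ‖α t c‖ ^ 2 ≤ ∑ c, ‖α s c‖ ^ 2 := by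
  have hderiv : ∀ t, HasDerivAt (fun t => ∑ c, ‖α t c‖ ^ 2)
      (-‖∑ c, ((Real.sqrt (κ c) : ℂ)) * α t c‖ ^ 2) t := by
    intro t
    rw [← sum_inner_cavityDrift ω]
    refine HasDerivAt.fun_sum fun c _ => ?_
    rw [cavityDrift_sqrt_eq fun c => (hκ c).le]
    exact (hα c t).norm_sq
  exact ⟨hderiv, fun s t hst =>
    antitone_of_hasDerivAt_nonpos hderiv (fun t => neg_nonpos.mpr (sq_nonneg _)) hst⟩

/-- For `n ≥ 1` modes with frequencies `ω_c`, decay rates `κ_c > 0`, and coherent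
amplitudes `α_c` obeying `α_c' = -i·ω_c·α_c - Σ_{c'} (√(κ_c·κ_{c'})/2)·α_{c'}`, the
total photon number satisfies
`d/dt (Σ_c |α_c|²) = -|Σ_c √κ_c·α_c|² ≤ 0`; in particular `t ↦ Σ_c |α_c(t)|²` is
non-increasing. -/
theorem multimode_photon_number_lyapunov (n : ℕ) (hn : 1 ≤ n)
    (ω κ : Fin n → ℝ) (hκ : ∀ c, 0 < κ c) (α : ℝ → Fin n → ℂ)
    (hα : ∀ c (t : ℝ),
      HasDerivAt (fun t => α t c)
        (-(Complex.I * (ω c : ℂ)) * α t c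
          - ∑ c', ((Real.sqrt (κ c * κ c') / 2 : ℝ) : ℂ) * α t c') t) :
    (∀ t : ℝ,
      HasDerivAt (fun t => ∑ c, ‖α t c‖ ^ 2)
        (-‖∑ c, ((Real.sqrt (κ c) : ℂ)) * α t c‖ ^ 2) t)
    ∧ ∀ s t : ℝ, s ≤ t → ∑ c, ‖α t c‖ ^ 2 ≤ ∑ c, ‖α s c‖ ^ 2 :=
  multimode_photon_number_lyapunov_general n ω κ hκ α hα
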